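/- Let T be a positively edge-weighted tree with square root embedding Ψ, and let L_1, L_2 be disjoint subsets of vertices such that the minimal spanning subtrees of L_1 and L_2 in T share an edge. Then there exist v_1, v_2 ∈ L_1 and w_1, w_2 ∈ L_2 with (Ψ(v_1) - Ψ(w_1)) · (Ψ(v_2) - Ψ(w_2)) < 0, i.e., some pair of cross vectors forms an obtuse angle. -/

import Mathlib

/-!
Removing an edge `e` splits the tree into two sides, and the `e`-coordinate of `Ψ_v a - Ψ_v b`
is `±√(w e)` if `e` separates `a` from `b` and `0` otherwise. Hence
`⟪Ψ a - Ψ b, Ψ c - Ψ d⟫` is a sum of terms `± w e` over the edges separating both pairs. Take the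
shared edge `e₀` on the paths `v₁ — v₂` and `w₁ — w₂`, and label `w₁, w₂` so that `e₀` does not
separate `v₁` from `w₁`. For the pairs `(v₁, w₂)` and `(v₂, w₁)`, `e₀` contributes `-w e₀`, and no
edge contributes positively: such an edge would separate `{v₁, v₂}` from `{w₁, w₂}`, although an
endpoint of `e₀` lies on both paths.
-/

open SimpleGraph

/-- The unique path between two vertices of a tree, as a walk. -/
noncomputable def treePath {V : Type*} (G : SimpleGraph V) (hG : G.IsTree) (a b : V) :
    G.Walk a b :=
  (hG.existsUnique_path a b).choose

/-- The square root embedding with base node `v`: the coordinate of `Ψ_v u` at edge `e`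
is `√(w e)` if `e` lies on the path from `v` to `u`, and `0` otherwise. -/
noncomputable def sqrtEmbed {V : Type*} [DecidableEq V] (G : SimpleGraph V) (hG : G.IsTree)
    [Fintype G.edgeSet] (w : Sym2 V → ℝ) (v u : V) : EuclideanSpace ℝ G.edgeSet :=
  WithLp.toLp 2 (fun e => if (e : Sym2 V) ∈ (treePath G hG v u).edges then Real.sqrt (w e) else 0)

/-- The tree metric: sum of the weights of the edges on the unique path. -/
noncomputable def treeDist {V : Type*} (G : SimpleGraph V) (hG : G.IsTree)
    (w : Sym2 V → ℝ) (a b : V) : ℝ :=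
  ((treePath G hG a b).edges.map w).sum

namespace SimpleGraph

variable {V : Type*} {G : SimpleGraph V}

lemma reachable_deleteEdges_or_of_walk {a x : V} (p : G.Walk a x) (y : V) :
    (G.deleteEdges {s(x, y)}).Reachable a x ∨ (G.deleteEdges {s(x, y)}).Reachable a y := by
  induction p with
  | nil => exact Or.inl .rfl
  | @cons a u x hadj q ih =>
    by_cases he : s(a, u) = s(x, y)
    · rcases Sym2.eq_iff.mp he with ⟨rfl, -⟩ | ⟨rfl, -⟩
      exacts [Or.inl .rfl, Or.inr .rfl]
    · have hadj' : (G.deleteEdges {s(x, y)}).Adj a u := deleteEdges_adj.mpr ⟨hadj, he⟩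
      exact ih.imp hadj'.reachable.trans hadj'.reachable.trans

/-- In a connected graph, deleting an edge leaves at most two classes of mutually reachable
vertices. -/
lemma Preconnected.reachable_deleteEdges_of_not_of_not (hG : G.Preconnected) {e : Sym2 V}
    {a b c : V} (hab : ¬(G.deleteEdges {e}).Reachable a b)
    (hbc : ¬(G.deleteEdges {e}).Reachable b c) : (G.deleteEdges {e}).Reachable a c := by
  induction e using Sym2.ind with
  | _ x y =>
    have side (u : V) := reachable_deleteEdges_or_of_walk (hG u x).some y
    rcases side a with ha | ha <;> rcases side b with hb | hb <;> rcases side c with hc | hc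
    all_goals first
      | exact ha.trans hc.symm
      | exact absurd (ha.trans hb.symm) hab
      | exact absurd (hb.trans hc.symm) hbc

end SimpleGraph

section TreePath

variable {V : Type*} {G : SimpleGraph V} (hG : G.IsTree)

lemma treePath_isPath (a b : V) : (treePath G hG a b).IsPath :=
  (hG.existsUnique_path a b).choose_spec.1

lemma treePath_eq_of_isPath {a b : V} {p : G.Walk a b} (hp : p.IsPath) : treePath G hG a b = p :=
  (hG.existsUnique_path a b).unique (treePath_isPath hG a b) hp

lemma mem_treePath_edges_iff_not_reachable (e : Sym2 V) (a b : V) :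
    e ∈ (treePath G hG a b).edges ↔ ¬(G.deleteEdges {e}).Reachable a b := by
  classical
  refine ⟨fun he hab => ?_, (treePath G hG a b).mem_edges_of_not_reachable_deleteEdges⟩
  induction e using Sym2.ind with
  | _ x y =>
    obtain ⟨p, hp⟩ := reachable_deleteEdges_iff_exists_walk.mp hab
    rw [treePath_eq_of_isPath hG p.bypass_isPath] at he
    exact hp (p.edges_bypass_subset_edges he)

lemma mem_treePath_edges_iff_not_iff (e : Sym2 V) (v a b : V) :
    e ∈ (treePath G hG a b).edges ↔
      ¬(e ∈ (treePath G hG v a).edges ↔ e ∈ (treePath G hG v b).edges) := by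
  simp only [mem_treePath_edges_iff_not_reachable, not_iff_not]
  refine ⟨fun hab => ⟨fun hva => hva.trans hab, fun hvb => hvb.trans hab.symm⟩, fun hiff => ?_⟩
  by_cases hva : (G.deleteEdges {e}).Reachable v a
  · exact hva.symm.trans (hiff.mp hva)
  · exact hG.connected.preconnected.reachable_deleteEdges_of_not_of_not
      (fun hav => hva hav.symm) (mt hiff.mpr hva)

lemma treePath_edges_subset_of_mem_support {a b x : V} (hx : x ∈ (treePath G hG a b).support) :
    (treePath G hG a x).edges ⊆ (treePath G hG a b).edges := by
  classical
  rw [treePath_eq_of_isPath hG ((treePath_isPath hG a b).takeUntil hx)]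
  exact (treePath G hG a b).edges_takeUntil_subset_edges hx

end TreePath

section SignOfProducts

variable {P Q P' Q' : Prop} [Decidable P] [Decidable Q] [Decidable P'] [Decidable Q'] {c : ℝ}

lemma ite_sub_ite_mul_ite_sub_ite_nonpos (h : (P ↔ P') → (Q ↔ Q') → (P ↔ Q)) :
    ((if P then c else 0) - if Q then c else 0) * ((if P' then c else 0) - if Q' then c else 0)
      ≤ 0 := by
  by_cases hP : P <;> by_cases hQ : Q <;> by_cases hP' : P' <;> by_cases hQ' : Q' <;>
    simp_all <;> nlinarith [sq_nonneg c]

lemma ite_sub_ite_mul_ite_sub_ite_neg (hc : c ≠ 0) (hPQ' : P ↔ Q') (hQP' : Q ↔ P')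
    (hPQ : ¬(P ↔ Q)) :
    ((if P then c else 0) - if Q then c else 0) * ((if P' then c else 0) - if Q' then c else 0)
      < 0 := by
  by_cases hP : P <;> by_cases hQ : Q <;> simp_all

end SignOfProducts

section SqrtEmbed

open RealInnerProductSpace

variable {V : Type*} [DecidableEq V] {G : SimpleGraph V} (hG : G.IsTree) [Fintype G.edgeSet]
  (w : Sym2 V → ℝ) (v : V)

lemma sqrtEmbed_apply (u : V) (e : G.edgeSet) :
    sqrtEmbed G hG w v u e = if (e : Sym2 V) ∈ (treePath G hG v u).edges then √(w e) else 0 :=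
  rfl

lemma inner_sqrtEmbed_sub_sub_neg (hw : ∀ e ∈ G.edgeSet, 0 < w e) {v₁ v₂ w₁ w₂ : V}
    {e₀ : Sym2 V} (h₁ : e₀ ∈ (treePath G hG v₁ v₂).edges) (h₂ : e₀ ∈ (treePath G hG w₁ w₂).edges)
    (h₃ : e₀ ∉ (treePath G hG v₁ w₁).edges) :
    ⟪sqrtEmbed G hG w v v₁ - sqrtEmbed G hG w v w₂,
      sqrtEmbed G hG w v v₂ - sqrtEmbed G hG w v w₁⟫ < 0 := by
  have he₀ : e₀ ∈ G.edgeSet := (treePath G hG v₁ v₂).edges_subset_edgeSet h₁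
  obtain ⟨x₀, hx₀⟩ : ∃ x : V, x ∈ e₀ := ⟨e₀.out.1, Sym2.out_fst_mem e₀⟩
  rw [real_inner_comm]
  simp only [PiLp.inner_apply, PiLp.sub_apply, sqrtEmbed_apply, RCLike.inner_apply, conj_trivial]
  refine Finset.sum_neg' (fun e _ => ?_) ⟨(⟨e₀, he₀⟩ : G.edgeSet), Finset.mem_univ _, ?_⟩
  · refine ite_sub_ite_mul_ite_sub_ite_nonpos fun hv₁₂ hw₂₁ => ?_
    have hv₁x₀ : (e : Sym2 V) ∉ (treePath G hG v₁ x₀).edges := fun he =>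
      (mem_treePath_edges_iff_not_iff hG e v v₁ v₂).mp
        (treePath_edges_subset_of_mem_support hG (Walk.mem_support_of_mem_edges h₁ hx₀) he) hv₁₂
    have hw₁x₀ : (e : Sym2 V) ∉ (treePath G hG w₁ x₀).edges := fun he =>
      (mem_treePath_edges_iff_not_iff hG e v w₁ w₂).mp
        (treePath_edges_subset_of_mem_support hG (Walk.mem_support_of_mem_edges h₂ hx₀) he)
        hw₂₁.symm
    rw [mem_treePath_edges_iff_not_iff hG _ v] at hv₁x₀ hw₁x₀
    tauto
  · rw [mem_treePath_edges_iff_not_iff hG e₀ v] at h₁ h₂ h₃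
    exact ite_sub_ite_mul_ite_sub_ite_neg (Real.sqrt_pos.mpr (hw e₀ he₀)).ne' (by tauto)
      (by tauto) (by tauto)

end SqrtEmbed

open RealInnerProductSpace in
theorem sqrtEmbed_obtuse_of_shared_edge_general {V : Type*} [DecidableEq V] (G : SimpleGraph V)
    (hG : G.IsTree) [Fintype G.edgeSet] (w : Sym2 V → ℝ) (hw : ∀ e ∈ G.edgeSet, 0 < w e)
    (v : V) (L₁ L₂ : Set V)
    (h : ∃ v₁ ∈ L₁, ∃ v₂ ∈ L₁, ∃ w₁ ∈ L₂, ∃ w₂ ∈ L₂, ∃ e : Sym2 V,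
      e ∈ (treePath G hG v₁ v₂).edges ∧ e ∈ (treePath G hG w₁ w₂).edges) :
    ∃ v₁ ∈ L₁, ∃ v₂ ∈ L₁, ∃ w₁ ∈ L₂, ∃ w₂ ∈ L₂,
      ⟪sqrtEmbed G hG w v v₁ - sqrtEmbed G hG w v w₁,
        sqrtEmbed G hG w v v₂ - sqrtEmbed G hG w v w₂⟫ < 0 := by
  obtain ⟨v₁, hv₁, v₂, hv₂, w₁, hw₁, w₂, hw₂, e₀, h₁, h₂⟩ := h
  by_cases h₃ : e₀ ∈ (treePath G hG v₁ w₁).edges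
  · have h₂' : e₀ ∈ (treePath G hG w₂ w₁).edges ∧ e₀ ∉ (treePath G hG v₁ w₂).edges := by
      rw [mem_treePath_edges_iff_not_iff hG e₀ v] at h₂ h₃
      rw [mem_treePath_edges_iff_not_iff hG e₀ v w₂ w₁,
        mem_treePath_edges_iff_not_iff hG e₀ v v₁ w₂]
      tauto
    exact ⟨v₁, hv₁, v₂, hv₂, w₁, hw₁, w₂, hw₂,
      inner_sqrtEmbed_sub_sub_neg hG w v hw h₁ h₂'.1 h₂'.2⟩
  · exact ⟨v₁, hv₁, v₂, hv₂, w₂, hw₂, w₁, hw₁, inner_sqrtEmbed_sub_sub_neg hG w v hw h₁ h₂ h₃⟩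

open RealInnerProductSpace in
/-- if the minimal spanning subtrees of the disjoint vertex sets `L₁` and `L₂`
share an edge (i.e., some path within `L₁` shares an edge with some path within `L₂`), then
some pair of cross vectors between the embedded sets forms an obtuse angle. -/
theorem sqrtEmbed_obtuse_of_shared_edge {V : Type*} [DecidableEq V] (G : SimpleGraph V)
    (hG : G.IsTree) [Fintype G.edgeSet] (w : Sym2 V → ℝ) (hw : ∀ e ∈ G.edgeSet, 0 < w e)
    (v : V) (L₁ L₂ : Set V) (hdisj : Disjoint L₁ L₂)
    (h : ∃ v₁ ∈ L₁, ∃ v₂ ∈ L₁, ∃ w₁ ∈ L₂, ∃ w₂ ∈ L₂, ∃ e : Sym2 V,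
      e ∈ (treePath G hG v₁ v₂).edges ∧ e ∈ (treePath G hG w₁ w₂).edges) :
    ∃ v₁ ∈ L₁, ∃ v₂ ∈ L₁, ∃ w₁ ∈ L₂, ∃ w₂ ∈ L₂,
      ⟪sqrtEmbed G hG w v v₁ - sqrtEmbed G hG w v w₁,
        sqrtEmbed G hG w v v₂ - sqrtEmbed G hG w v w₂⟫ < 0 :=
  sqrtEmbed_obtuse_of_shared_edge_general G hG w hw v L₁ L₂ h
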